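/- (Barendregt's lemma / van Daalen) Let F be a term with free variable x and B a closed term, and assume F[x:=B] ▷* t. Then there is a term G with F ▷* G such that, writing I for the set of pure occurrences of x in G, w_i = (x_[i] Arg(x_[i], G)) for i ∈ I, and G = D[[]_i := w_i : i ∈ I] for a multi-hole context D in which x does not occur, one has t = D[[]_i := w'_i : i ∈ I] for some terms w'_i with w_i[x:=B] ▷* w'_i for each i ∈ I. -/

import Mathlib

/-! ## A de Bruijn presentation of the untyped λ-calculus -/

/-- Untyped λ-terms in de Bruijn representation. -/
inductive Lam : Type where
  | var : ℕ → Lam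
  | app : Lam → Lam → Lam
  | abs : Lam → Lam
  deriving DecidableEq

namespace Lam

/-- Lifting of de Bruijn indices (cutoff `d`). -/
def lift (d : ℕ) : Lam → Lam
  | var n => if n < d then var n else var (n + 1)
  | app a b => app (lift d a) (lift d b)
  | abs a => abs (lift (d + 1) a)

/-- Capture-avoiding substitution of `u` for the free variable `k`. -/
def subst : Lam → ℕ → Lam → Lam
  | var n, k, u => if n = k then u else if k < n then var (n - 1) else var n
  | app a b, k, u => app (subst a k u) (subst b k u)
  | abs a, k, u => abs (subst a (k + 1) (lift 0 u))

/-- One-step β-reduction `▷`. -/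
inductive Step : Lam → Lam → Prop
  | beta (a b : Lam) : Step (app (abs a) b) (subst a 0 b)
  | appL {a a' : Lam} (b : Lam) : Step a a' → Step (app a b) (app a' b)
  | appR (a : Lam) {b b' : Lam} : Step b b' → Step (app a b) (app a b')
  | abs {a a' : Lam} : Step a a' → Step (Lam.abs a) (Lam.abs a')

/-- β-reduction `▷*` : reflexive and transitive closure of `▷`. -/
def Steps : Lam → Lam → Prop := Relation.ReflTransGen Step

/-- β-normal term. -/
def Normal (t : Lam) : Prop := ∀ t', ¬ Step t t'

/-- `Free x t` : the variable `x` (de Bruijn index, seen from the root) occurs free in `t`. -/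
def Free : ℕ → Lam → Prop
  | x, var n => x = n
  | x, app a b => Free x a ∨ Free x b
  | x, abs a => Free (x + 1) a

/-- Closed term. -/
def Closed (t : Lam) : Prop := ∀ x, ¬ Free x t

/-- A variable applied to a (possibly empty) list of arguments. -/
inductive HeadVarApp : Lam → Prop
  | var (n : ℕ) : HeadVarApp (var n)
  | app {a : Lam} (b : Lam) : HeadVarApp a → HeadVarApp (app a b)

/-- Head normal forms `λx₁…λxₙ.(y t₁ … tₘ)`. -/
inductive IsHNF : Lam → Prop
  | head {t : Lam} : HeadVarApp t → IsHNF t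
  | abs {a : Lam} : IsHNF a → IsHNF (Lam.abs a)

/-- A term is solvable if it β-reduces to a head normal form. -/
def Solvable (t : Lam) : Prop := ∃ h, Steps t h ∧ IsHNF h

/-- `Ω = (λx.(x x))(λx.(x x))`. -/
def Omega : Lam := app (abs (app (var 0) (var 0))) (abs (app (var 0) (var 0)))

/-- Ω-reduction `▷_Ω` : replace an unsolvable subterm by `Ω`. -/
inductive OmegaStep : Lam → Lam → Prop
  | unsolv {t : Lam} : ¬ Solvable t → OmegaStep t Omega
  | appL {a a' : Lam} (b : Lam) : OmegaStep a a' → OmegaStep (app a b) (app a' b)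
  | appR (a : Lam) {b b' : Lam} : OmegaStep b b' → OmegaStep (app a b) (app a b')
  | abs {a a' : Lam} : OmegaStep a a' → OmegaStep (Lam.abs a) (Lam.abs a')

/-- `▷_Ω*`. -/
def OmegaSteps : Lam → Lam → Prop := Relation.ReflTransGen OmegaStep

/-- `▷_{βΩ}` : union of `▷` and `▷_Ω`. -/
def BOStep (t t' : Lam) : Prop := Step t t' ∨ OmegaStep t t'

/-- `▷_{βΩ}*`. -/
def BOSteps : Lam → Lam → Prop := Relation.ReflTransGen BOStep

/-- `u ≃ v` : equality in the λ-theory H (common `▷_{βΩ}*`-reduct). -/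
def SimH (u v : Lam) : Prop := ∃ w, BOSteps u w ∧ BOSteps v w

/-- Simultaneous (parallel) substitution along `σ`. -/
def psubst (σ : ℕ → Lam) : Lam → Lam
  | var n => σ n
  | app a b => app (psubst σ a) (psubst σ b)
  | abs a => abs (psubst (fun n => match n with | 0 => var 0 | m + 1 => lift 0 (σ m)) a)

/-- `(x V)` : the application of a head `h` to a list of arguments. -/
def mkApps (h : Lam) (as : List Lam) : Lam := as.foldl app h

/-- `U ⊑ V` : some initial segment of `V` is obtained from `U` by a substitution
followed by componentwise β-reductions. -/
def Sqsubseteq (U V : List Lam) : Prop :=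
  ∃ (σ : ℕ → Lam) (W : List Lam), W <+: V ∧
    List.Forall₂ (fun u w => Steps (psubst σ u) w) U W

/-! ### Occurrences as positions -/

/-- Directions inside a term. -/
inductive Dir : Type where
  | left | right | down
  deriving DecidableEq

/-- Positions (occurrences) in a term. -/
abbrev Pos := List Dir

/-- The subterm of `t` at position `p` (if any). -/
def subtermAt : Lam → Pos → Option Lam
  | t, [] => some t
  | app a _, Dir.left :: p => subtermAt a p
  | app _ b, Dir.right :: p => subtermAt b p
  | abs a, Dir.down :: p => subtermAt a p
  | _, _ :: _ => none

/-- Replace the subterm of `t` at position `p` by `s` (if the position exists). -/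
def replaceAt : Lam → Pos → Lam → Option Lam
  | _, [], s => some s
  | app a b, Dir.left :: p, s => (replaceAt a p s).map (fun a' => app a' b)
  | app a b, Dir.right :: p, s => (replaceAt b p s).map (fun b' => app a b')
  | abs a, Dir.down :: p, s => (replaceAt a p s).map Lam.abs
  | _, _ :: _, _ => none

/-- `OccOf x t p` : position `p` is an occurrence in `t` of the free variable `x`
(index seen from the root, hence shifted by the number of binders crossed). -/
def OccOf (x : ℕ) (t : Lam) (p : Pos) : Prop :=
  subtermAt t p = some (var (x + p.count Dir.down))

/-- `ArgOf t p V` : `V` is the maximal list of arguments, in `t`, of the occurrence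
sitting at position `p`; i.e. `([] V)` is the applicative context of that occurrence. -/
def ArgOf (t : Lam) (p : Pos) (V : List Lam) : Prop :=
  ∃ (q : Pos) (h : Lam),
    p = q ++ List.replicate V.length Dir.left ∧
    (∀ q' : Pos, q ≠ q' ++ [Dir.left]) ∧
    subtermAt t q = some (mkApps h V) ∧ subtermAt t p = some h

/-- `InArgOfOcc x t p q` : `q` is an occurrence of `x` in `t` and the position `p` lies
inside one of the elements of `Arg(x_[q], t)`. -/
def InArgOfOcc (x : ℕ) (t : Lam) (p q : Pos) : Prop :=
  OccOf x t q ∧ ∃ (r : Pos) (n : ℕ),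
    q = r ++ List.replicate n Dir.left ∧
    (∀ r' : Pos, r ≠ r' ++ [Dir.left]) ∧
    ∃ (j : ℕ) (s : Pos), j < n ∧ p = r ++ List.replicate j Dir.left ++ Dir.right :: s

/-- The occurrence `p` of `x` is pure in `t` : no other occurrence `q` of `x` in `t`
is such that `p` occurs in one of the elements of `Arg(x_[q], t)`. -/
def PureOcc (x : ℕ) (t : Lam) (p : Pos) : Prop :=
  OccOf x t p ∧ ∀ q, q ≠ p → ¬ InArgOfOcc x t p q

/-- Renaming of the free variable `y` into `x`. -/
def rename (y x : ℕ) : Lam → Lam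
  | var n => if n = y then var x else var n
  | app a b => app (rename y x a) (rename y x b)
  | abs a => abs (rename (y + 1) (x + 1) a)

/-- `Residue x u v p p'` : along some β-reduction from `u` to `v`, the occurrence `p'` of
`x` in `v` is a residue (traced copy) of the occurrence `p` of `x` in `u`.  This is
expressed by marking the occurrence `p` of `x` with a fresh variable `y` and tracing the
occurrences of `y`. -/
def Residue (x : ℕ) (u v : Lam) (p p' : Pos) : Prop :=
  ∃ (y : ℕ) (u₀ v₀ : Lam),
    ¬ Free y u ∧
    replaceAt u p (var (y + p.count Dir.down)) = some u₀ ∧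
    Steps u₀ v₀ ∧ rename y x v₀ = v ∧ OccOf y v₀ p'

/-- The occurrence `p` of the free variable `0` ("x") in `G` is good with respect to the
closed term `A` : it is pure in `G` and `u[x:=A]` is solvable for every subterm `u` of
`G` in which this occurrence occurs. -/
def GoodOcc (A G : Lam) (p : Pos) : Prop :=
  PureOcc 0 G p ∧
    ∀ (q : Pos) (u : Lam), q <+: p → subtermAt G q = some u →
      Solvable (subst u (q.count Dir.down) A)

/-! ### Miscellaneous -/

/-- A fixed effective Gödel numbering of λ-terms. -/
def code : Lam → ℕ
  | var n => Nat.pair 0 n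
  | app a b => Nat.pair 1 (Nat.pair (code a) (code b))
  | abs a => Nat.pair 2 (code a)

/-- Body `f^k z` of the Church numeral. -/
def churchBody : ℕ → Lam
  | 0 => var 0
  | k + 1 => app (var 1) (churchBody k)

/-- The Church numeral `c_k = λf λz.(f^k z)`. -/
def church (k : ℕ) : Lam := abs (abs (churchBody k))

/-- `n`-fold abstraction `λx₁…λxₙ.t`. -/
def absN : ℕ → Lam → Lam
  | 0, t => t
  | n + 1, t => abs (absN n t)

/-- Number of symbols of a term. -/
def size : Lam → ℕ
  | var _ => 1
  | app a b => size a + size b + 1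
  | abs a => size a + 1

/-- Subterm relation. -/
inductive Subterm : Lam → Lam → Prop
  | refl (t : Lam) : Subterm t t
  | appL {s a : Lam} (b : Lam) : Subterm s a → Subterm s (app a b)
  | appR (a : Lam) {s b : Lam} : Subterm s b → Subterm s (app a b)
  | abs {s a : Lam} : Subterm s a → Subterm s (Lam.abs a)

/-- `t` contains no subterm of the form `(x u)` for the free variable `x`. -/
def NoVarApp : ℕ → Lam → Prop
  | _, var _ => True
  | x, app a b => a ≠ var x ∧ NoVarApp x a ∧ NoVarApp x b
  | x, abs a => NoVarApp (x + 1) a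

/-- Headed by the variable `d` : term of the form `(x V)` with `x = var d`. -/
inductive Headed : ℕ → Lam → Prop
  | var (d : ℕ) : Headed d (var d)
  | app {d : ℕ} {a : Lam} (b : Lam) : Headed d a → Headed d (app a b)

end Lam

namespace Lam

/-- `BL B d u t` : `t` is obtained from `u[x:=B]` (where `x` is the variable of de Bruijn
index `d`) by performing β-reductions only inside the subterms `w_i[x:=B]`, where the
`w_i = (x_[i] Arg(x_[i], u))` are the maximal applicative spines headed by the pure
occurrences `x_[i]` of `x` in `u`.  In other words, writing `u = D[[]_i := w_i : i ∈ I]`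
for the x-free multi-hole context `D` whose holes are exactly these spines,
`t = D[[]_i := w'_i : i ∈ I]` with `w_i[x:=B] ▷* w'_i`. -/
inductive BL (B : Lam) : ℕ → Lam → Lam → Prop
  | spine {d : ℕ} {g w' : Lam} : Headed d g → Steps (subst g d B) w' → BL B d g w'
  | var {d n : ℕ} : n ≠ d → BL B d (var n) (subst (var n) d B)
  | app {d : ℕ} {a b a' b' : Lam} : ¬ Headed d (app a b) →
      BL B d a a' → BL B d b b' → BL B d (app a b) (app a' b')
  | abs {d : ℕ} {a a' : Lam} : BL B (d + 1) a a' → BL B d (Lam.abs a) (Lam.abs a')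

end Lam

/-!
`BL B 0 G t` is a backward simulation of β-reduction: if `BL B d u t` and `t ▷ t'`, then
`u ▷* u'` with `BL B d u' t'`. A step inside one of the reducts `w'_i` is absorbed by that
spine. Any other redex `(λc) b'` of `t` lies in the `x`-free context, whose applications are
not headed by `x`, so it is the image of a redex `(λc₀) b` of `u`; contracting that one
keeps the relation by the substitution lemma, since `[x:=B]` and `[0:=b]` commute. Since `B`
is closed, `[x:=B]` passes under binders without lifting `B`, and this is what makes a
single relation indexed by the depth of `x` work. The theorem follows by induction on
`F[x:=B] ▷* t`, starting from `BL B 0 F (F[x:=B])`.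
-/

namespace Lam

theorem lift_lift {i j : ℕ} (h : i ≤ j) (t : Lam) :
    lift i (lift j t) = lift (j + 1) (lift i t) := by
  induction t generalizing i j with
  | var n => grind [lift]
  | app a b iha ihb => simp [lift, iha h, ihb h]
  | abs a ih => simp [lift, ih (by omega : i + 1 ≤ j + 1)]

theorem subst_lift (k : ℕ) (t u : Lam) : subst (lift k t) k u = t := by
  induction t generalizing k u with
  | var n => grind [lift, subst]
  | app a b iha ihb => simp [lift, subst, iha, ihb]
  | abs a ih => simp [lift, subst, ih]

theorem lift_subst_of_le {i k : ℕ} (h : i ≤ k) (t u : Lam) :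
    lift i (subst t k u) = subst (lift i t) (k + 1) (lift i u) := by
  induction t generalizing i k u with
  | var n => grind [lift, subst]
  | app a b iha ihb => simp [lift, subst, iha h, ihb h]
  | abs a ih =>
    simp only [lift, subst, abs.injEq]
    rw [ih (by omega : i + 1 ≤ k + 1), lift_lift (Nat.zero_le i)]

theorem lift_subst_of_ge {i k : ℕ} (h : k ≤ i) (t u : Lam) :
    lift i (subst t k u) = subst (lift (i + 1) t) k (lift i u) := by
  induction t generalizing i k u with
  | var n => grind [lift, subst]
  | app a b iha ihb => simp [lift, subst, iha h, ihb h]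
  | abs a ih =>
    simp only [lift, subst, abs.injEq]
    rw [ih (by omega : k + 1 ≤ i + 1), lift_lift (Nat.zero_le i)]

theorem subst_subst {k d : ℕ} (h : k ≤ d) (t u v : Lam) :
    subst (subst t k u) d v = subst (subst t (d + 1) (lift k v)) k (subst u d v) := by
  induction t generalizing k d u v with
  | var n => grind [subst, subst_lift]
  | app a b iha ihb => simp [subst, iha h, ihb h]
  | abs a ih =>
    simp only [subst, abs.injEq]
    rw [ih (by omega : k + 1 ≤ d + 1), lift_subst_of_le (Nat.zero_le d), lift_lift (Nat.zero_le k)]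

theorem lift_eq_self {j : ℕ} {t : Lam} (h : ∀ x, j ≤ x → ¬ Free x t) : lift j t = t := by
  induction t generalizing j with
  | var n => simpa [lift] using fun hn => h n hn rfl
  | app a b iha ihb =>
    simp only [lift, app.injEq]
    exact ⟨iha fun x hx hf => h x hx (Or.inl hf), ihb fun x hx hf => h x hx (Or.inr hf)⟩
  | abs a ih =>
    simp only [lift, abs.injEq]
    refine ih fun x hx hf => ?_
    obtain ⟨y, rfl⟩ : ∃ y, x = y + 1 := ⟨x - 1, by omega⟩
    exact h y (by omega) hf

theorem Closed.lift_eq {B : Lam} (hB : Closed B) (j : ℕ) : lift j B = B :=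
  lift_eq_self fun x _ => hB x

theorem Steps.refl (t : Lam) : Steps t t := Relation.ReflTransGen.refl

theorem Steps.trans {a b c : Lam} (h₁ : Steps a b) (h₂ : Steps b c) : Steps a c :=
  Relation.ReflTransGen.trans h₁ h₂

theorem Step.steps {a b : Lam} (h : Step a b) : Steps a b :=
  Relation.ReflTransGen.single h

theorem Steps.appL {a a' : Lam} (b : Lam) (h : Steps a a') : Steps (app a b) (app a' b) :=
  Relation.ReflTransGen.lift (app · b) (fun _ _ => Step.appL b) _ _ h

theorem Steps.appR (a : Lam) {b b' : Lam} (h : Steps b b') : Steps (app a b) (app a b') :=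
  Relation.ReflTransGen.lift (app a) (fun _ _ => Step.appR a) _ _ h

theorem Steps.app {a a' b b' : Lam} (ha : Steps a a') (hb : Steps b b') :
    Steps (app a b) (app a' b') :=
  (ha.appL b).trans (hb.appR a')

theorem Steps.abs {a a' : Lam} (h : Steps a a') : Steps (Lam.abs a) (Lam.abs a') :=
  Relation.ReflTransGen.lift Lam.abs (fun _ _ => Step.abs) _ _ h

theorem Step.lift {t t' : Lam} (j : ℕ) (h : Step t t') : Step (lift j t) (lift j t') := by
  induction h generalizing j with
  | beta a b => rw [lift_subst_of_ge (Nat.zero_le j)]; exact Step.beta _ _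
  | appL b _ ih => exact Step.appL _ (ih j)
  | appR a _ ih => exact Step.appR _ (ih j)
  | abs _ ih => exact Step.abs (ih (j + 1))

theorem Steps.lift {t t' : Lam} (j : ℕ) (h : Steps t t') : Steps (lift j t) (lift j t') :=
  Relation.ReflTransGen.lift (Lam.lift j) (fun _ _ => Step.lift j) _ _ h

theorem Step.subst_left {t t' : Lam} (k : ℕ) (u : Lam) (h : Step t t') :
    Step (subst t k u) (subst t' k u) := by
  induction h generalizing k u with
  | beta a b => rw [subst_subst (Nat.zero_le k)]; exact Step.beta _ _
  | appL b _ ih => exact Step.appL _ (ih k u)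
  | appR a _ ih => exact Step.appR _ (ih k u)
  | abs _ ih => exact Step.abs (ih (k + 1) (Lam.lift 0 u))

theorem Steps.subst_left {t t' : Lam} (k : ℕ) (u : Lam) (h : Steps t t') :
    Steps (subst t k u) (subst t' k u) :=
  Relation.ReflTransGen.lift (subst · k u) (fun _ _ => Step.subst_left k u) _ _ h

theorem Steps.subst_right (t : Lam) (k : ℕ) {u u' : Lam} (h : Steps u u') :
    Steps (subst t k u) (subst t k u') := by
  induction t generalizing k u u' with
  | var n => simp only [subst]; split_ifs <;> first | exact h | exact Steps.refl _
  | app a b iha ihb => exact (iha k h).app (ihb k h)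
  | abs a ih => exact (ih (k + 1) (h.lift 0)).abs

theorem Steps.subst {t t' u u' : Lam} (k : ℕ) (ht : Steps t t') (hu : Steps u u') :
    Steps (subst t k u) (subst t' k u') :=
  (ht.subst_left k u).trans (Steps.subst_right t' k hu)

theorem headed_app_iff {d : ℕ} {a b : Lam} : Headed d (app a b) ↔ Headed d a :=
  ⟨fun | .app _ h => h, .app b⟩

theorem Headed.lift {d j : ℕ} {g : Lam} (hj : j ≤ d) (h : Headed d g) :
    Headed (d + 1) (lift j g) := by
  induction h with
  | var => simp only [Lam.lift, if_neg (show ¬d < j by omega)]; exact .var _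
  | app b _ ih => exact .app _ ih

theorem Headed.of_lift {d j : ℕ} {g : Lam} (hj : j ≤ d) (h : Headed (d + 1) (Lam.lift j g)) :
    Headed d g := by
  induction g with
  | var n =>
    simp only [Lam.lift] at h
    split_ifs at h <;> cases h
    · omega
    · exact .var _
  | app a b iha _ => simp only [Lam.lift, headed_app_iff] at h; exact .app _ (iha h)
  | abs a _ => cases h

theorem Headed.subst {d k : ℕ} {g : Lam} (hk : k ≤ d) (b : Lam) (h : Headed (d + 1) g) :
    Headed d (Lam.subst g k b) := by
  induction h with
  | var => simp only [Lam.subst, if_neg (show ¬d + 1 = k by omega), if_pos (show k < d + 1 by omega)]; exact .var _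
  | app c _ ih => exact .app _ ih

namespace BL

variable {B : Lam}

theorem of_subst (hB : Closed B) : ∀ (d : ℕ) (u : Lam), BL B d u (Lam.subst u d B)
  | d, Lam.var n => by
    by_cases h : n = d
    · subst h; exact spine (.var _) (Steps.refl _)
    · exact var h
  | d, Lam.app a b => by
    by_cases h : Headed d (Lam.app a b)
    · exact spine h (Steps.refl _)
    · exact app h (of_subst hB d a) (of_subst hB d b)
  | d, Lam.abs a => by
    rw [Lam.subst, hB.lift_eq]
    exact abs (of_subst hB (d + 1) a)

theorem steps (hB : Closed B) {d : ℕ} {u w : Lam} (h : BL B d u w) : Steps (Lam.subst u d B) w := by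
  induction h with
  | spine _ hw => exact hw
  | var _ => exact Steps.refl _
  | app _ _ _ iha ihb => exact iha.app ihb
  | abs _ ih => rw [Lam.subst, hB.lift_eq]; exact ih.abs

theorem lift (hB : Closed B) {d j : ℕ} {b b' : Lam} (h : BL B d b b') (hj : j ≤ d) :
    BL B (d + 1) (Lam.lift j b) (Lam.lift j b') := by
  induction h generalizing j with
  | spine hg hw =>
    refine spine (hg.lift hj) ?_
    rw [← hB.lift_eq j, ← lift_subst_of_le hj]
    exact hw.lift j
  | @var d n hn =>
    rw [lift_subst_of_le hj, hB.lift_eq, Lam.lift]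
    split_ifs <;> exact var (by omega)
  | app hnh _ _ iha ihb =>
    refine app (fun hcon => hnh ?_) (iha hj) (ihb hj)
    rw [headed_app_iff] at hcon ⊢
    exact hcon.of_lift hj
  | abs _ ih => exact abs (ih (by omega))

theorem subst (hB : Closed B) {d k : ℕ} {c c' b b' : Lam} (hc : BL B (d + 1) c c') (hk : k ≤ d)
    (hb : BL B d b b') : BL B d (Lam.subst c k b) (Lam.subst c' k b') := by
  generalize he : d + 1 = e at hc
  induction hc generalizing d k b b' with
  | @spine e g w' hg hw =>
    subst he
    refine spine (hg.subst hk b) ?_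
    rw [subst_subst hk, hB.lift_eq]
    exact Steps.subst k hw (hb.steps hB)
  | @var e n hn =>
    subst he
    by_cases hnk : n = k
    · subst hnk
      simpa [Lam.subst, hn, show ¬d + 1 < n by omega] using hb
    · have hm : (if k < n then n - 1 else n) ≠ d := by split_ifs <;> omega
      convert var (B := B) hm using 1 <;> grind [Lam.subst]
  | @app e p q p' q' hnh hp hq ihp ihq =>
    subst he
    by_cases hh : Headed d (Lam.app (Lam.subst p k b) (Lam.subst q k b))
    -- the head of `p` was the variable `k` and `b` is headed by `x`: a new spine appears
    · refine spine hh ?_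
      have hpq := (app hnh hp hq).steps hB
      change Steps (Lam.subst (Lam.subst (Lam.app p q) k b) d B) (Lam.subst (Lam.app p' q') k b')
      rw [subst_subst hk, hB.lift_eq]
      exact Steps.subst k hpq (hb.steps hB)
    · exact app hh (ihp hk hb rfl) (ihq hk hb rfl)
  | abs _ ih =>
    subst he
    exact abs (ih (by omega) (hb.lift hB (Nat.zero_le d)) rfl)

theorem eq_abs_of_abs {d : ℕ} {a c : Lam} (hnh : ¬ Headed d a) (h : BL B d a (Lam.abs c)) :
    ∃ c₀, a = Lam.abs c₀ ∧ BL B (d + 1) c₀ c := by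
  generalize hw : Lam.abs c = w at h
  cases h with
  | spine hg _ => exact absurd hg hnh
  | @var _ n hn =>
    simp only [Lam.subst, hn, if_false] at hw
    split_ifs at hw
  | app => cases hw
  | abs hc => cases hw; exact ⟨_, rfl, hc⟩

theorem exists_steps_of_step (hB : Closed B) {d : ℕ} {u t t' : Lam} (hbl : BL B d u t)
    (hs : Step t t') : ∃ u', Steps u u' ∧ BL B d u' t' := by
  induction hbl generalizing t' with
  | spine hg hw => exact ⟨_, Steps.refl _, spine hg (hw.trans hs.steps)⟩
  | @var d n hn =>
    simp only [Lam.subst, hn, if_false] at hs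
    split_ifs at hs <;> cases hs
  | @app d a b a' b' hnh ha hb iha ihb =>
    cases hs with
    | beta c _ =>
      obtain ⟨c₀, rfl, hc⟩ := eq_abs_of_abs (fun hg => hnh (.app b hg)) ha
      exact ⟨Lam.subst c₀ 0 b, (Step.beta c₀ b).steps, hc.subst hB (Nat.zero_le d) hb⟩
    | appL _ hstep =>
      obtain ⟨a₁, hsa, hba⟩ := iha hstep
      refine ⟨Lam.app a₁ b, hsa.appL b, ?_⟩
      by_cases hh : Headed d (Lam.app a₁ b)
      · exact spine hh ((hba.steps hB).app (hb.steps hB))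
      · exact app hh hba hb
    | appR _ hstep =>
      obtain ⟨b₁, hsb, hbb⟩ := ihb hstep
      exact ⟨Lam.app a b₁, hsb.appR a, app (by rwa [headed_app_iff] at hnh ⊢) ha hbb⟩
  | abs _ ih =>
    cases hs with
    | abs hstep =>
      obtain ⟨a₁, hsa, hba⟩ := ih hstep
      exact ⟨Lam.abs a₁, hsa.abs, abs hba⟩

theorem exists_steps_of_steps (hB : Closed B) {d : ℕ} {u t t' : Lam} (hbl : BL B d u t)
    (hs : Steps t t') : ∃ u', Steps u u' ∧ BL B d u' t' := by
  induction hs with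
  | refl => exact ⟨u, Steps.refl u, hbl⟩
  | tail _ hstep ih =>
    obtain ⟨u₁, hu₁, hbl₁⟩ := ih
    obtain ⟨u₂, hu₂, hbl₂⟩ := hbl₁.exists_steps_of_step hB hstep
    exact ⟨u₂, hu₁.trans hu₂, hbl₂⟩

end BL

end Lam

open Lam in
/-- Barendregt's lemma / van Daalen: if `B` is closed and
`F[x:=B] ▷* t`, then there is `G` with `F ▷* G` such that `t` is obtained from `G` by
substituting `B` for `x` and reducing only inside the maximal spines
`(x_[i] Arg(x_[i], G))` of the pure occurrences of `x` in `G`. -/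
theorem barendregt_lemma (F B t : Lam) (hB : Closed B)
    (h : Steps (subst F 0 B) t) :
    ∃ G, Steps F G ∧ BL B 0 G t :=
  (BL.of_subst hB 0 F).exists_steps_of_steps hB h
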